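/- For every β ∈ (1/3, 1/2): Σ_{F∈ℱ_{>0}} λ_F · s^F(β) ≤ f(β)·p* componentwise, where f(β) := β·ω·(3 − 1/β − ω)/(1 − ω) with ω := 1 − √(1/β − 2). -/

import Mathlib

open scoped Classical
open Finset

noncomputable section

variable {V : Type*} [Fintype V] [DecidableEq V]

/-- The edge set of a graph as a `Finset` of `Sym2 V`. -/
def edgesOf (G : SimpleGraph V) : Finset (Sym2 V) :=
  Finset.univ.filter (fun e => e ∈ G.edgeSet)

/-- Degree of a vertex in a set of edges. -/
def degOn (J : Finset (Sym2 V)) (v : V) : ℕ :=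
  (J.filter (fun e => v ∈ e)).card

/-- The set of vertices of odd degree in a set of edges. -/
def oddVerts (J : Finset (Sym2 V)) : Finset V :=
  Finset.univ.filter (fun v => Odd (degOn J v))

/-- `J` is a `T`-join of `G`: a set of edges of `G` whose odd-degree vertex set is `T`. -/
def IsTJoin (G : SimpleGraph V) (T : Finset V) (J : Finset (Sym2 V)) : Prop :=
  J ⊆ edgesOf G ∧ oddVerts J = T

/-- `F` is a spanning tree of `G`: edges of `G`, connected, with `|V| - 1` edges. -/
def IsSpanningTree (G : SimpleGraph V) (F : Finset (Sym2 V)) : Prop :=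
  F ⊆ edgesOf G ∧ (SimpleGraph.fromEdgeSet (F : Set (Sym2 V))).Connected ∧
    F.card + 1 = Fintype.card V

/-- δ(W): the set of edges of `G` with exactly one endpoint in `W`. -/
def cutEdges (G : SimpleGraph V) (W : Finset V) : Finset (Sym2 V) :=
  (edgesOf G).filter (fun e => ∃ u v, e = s(u, v) ∧ u ∈ W ∧ v ∉ W)

/-- `𝒲` is a partition of the vertex set `V`. -/
def IsPartitionOf (𝒲 : Finset (Finset V)) : Prop :=
  (∀ W ∈ 𝒲, W.Nonempty) ∧
  (∀ W₁ ∈ 𝒲, ∀ W₂ ∈ 𝒲, W₁ ≠ W₂ → Disjoint W₁ W₂) ∧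
  (∀ v : V, ∃ W ∈ 𝒲, v ∈ W)

/-- δ(𝒲): the set of edges of `G` whose endpoints lie in different classes of `𝒲`. -/
def partitionCut (G : SimpleGraph V) (𝒲 : Finset (Finset V)) : Finset (Sym2 V) :=
  (edgesOf G).filter (fun e => ¬ ∃ W ∈ 𝒲, ∀ v ∈ e, v ∈ W)

/-- `x(A) = Σ_{e ∈ A} x(e)`. -/
def xval (x : Sym2 V → ℝ) (A : Finset (Sym2 V)) : ℝ := ∑ e ∈ A, x e

/-- `cᵀx`, summed over the edges of `G`. -/
def dotE (G : SimpleGraph V) (c x : Sym2 V → ℝ) : ℝ := ∑ e ∈ edgesOf G, c e * x e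

/-- Membership in the polyhedron `P(G,T)`. -/
def memP (G : SimpleGraph V) (T : Finset V) (x : Sym2 V → ℝ) : Prop :=
  (∀ W : Finset V, W.Nonempty → W ≠ Finset.univ → Even ((W ∩ T).card) →
      2 ≤ xval x (cutEdges G W)) ∧
  (∀ 𝒲 : Finset (Finset V), IsPartitionOf 𝒲 →
      (𝒲.card : ℝ) - 1 ≤ xval x (partitionCut G 𝒲)) ∧
  (∀ e ∈ edgesOf G, 0 ≤ x e ∧ x e ≤ 2)

/-- `m` (an edge multiplicity vector, values in `{0,1,2}`) is a `T`-tour of `G`: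
its support consists of edges of `G`, the support spans a connected graph on `V`,
and the vertices of odd degree (with multiplicities) are exactly `T`. -/
def IsTTour (G : SimpleGraph V) (T : Finset V) (m : Sym2 V → ℕ) : Prop :=
  (∀ e, 0 < m e → e ∈ G.edgeSet) ∧ (∀ e, m e ≤ 2) ∧
  (SimpleGraph.fromEdgeSet {e | 0 < m e}).Connected ∧
  (∀ v : V, (Odd (∑ e ∈ edgesOf G, if v ∈ e then m e else 0) ↔ v ∈ T))

/-- The `c`-length of a multiset of edges given by multiplicities `m`. -/
def tourCost (G : SimpleGraph V) (c : Sym2 V → ℝ) (m : Sym2 V → ℕ) : ℝ :=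
  ∑ e ∈ edgesOf G, (m e : ℝ) * c e

/-- `opt(G,T,c)`: the minimum `c`-length of a `T`-tour. -/
def optLen (G : SimpleGraph V) (T : Finset V) (c : Sym2 V → ℝ) : ℝ :=
  sInf {L : ℝ | ∃ m, IsTTour G T m ∧ L = tourCost G c m}

/-- The `c`-length of a set of edges. -/
def setCost (c : Sym2 V → ℝ) (J : Finset (Sym2 V)) : ℝ := ∑ e ∈ J, c e

/-- `τ(G,T',c)`: the minimum `c`-length of a `T'`-join. -/
def tau (G : SimpleGraph V) (T' : Finset V) (c : Sym2 V → ℝ) : ℝ :=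
  sInf {L : ℝ | ∃ J, IsTJoin G T' J ∧ L = setCost c J}

/-- Membership in `Q₊(G,T')`: nonnegative and at least `1` on every `T'`-cut. -/
def memQplus (G : SimpleGraph V) (T' : Finset V) (x : Sym2 V → ℝ) : Prop :=
  (∀ e ∈ edgesOf G, 0 ≤ x e) ∧
  (∀ W : Finset V, W.Nonempty → W ≠ Finset.univ → Odd ((W ∩ T').card) →
      1 ≤ xval x (cutEdges G W))

/-- Symmetric difference of two finite sets. -/
def symDiff (A B : Finset V) : Finset V := (A \ B) ∪ (B \ A)

/-- `p*(e) = Σ_{F ∈ 𝓕, e ∈ F(T)} λ_F`, where `JT F` plays the role of `F(T)`. -/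
def pstar (𝓕 : Finset (Finset (Sym2 V))) (lam : Finset (Sym2 V) → ℝ)
    (JT : Finset (Sym2 V) → Finset (Sym2 V)) (e : Sym2 V) : ℝ :=
  ∑ F ∈ 𝓕.filter (fun F => e ∈ JT F), lam F

/-- `q*(e) = Σ_{F ∈ 𝓕, e ∈ F ∖ F(T)} λ_F`. -/
def qstar (𝓕 : Finset (Finset (Sym2 V))) (lam : Finset (Sym2 V) → ℝ)
    (JT : Finset (Sym2 V) → Finset (Sym2 V)) (e : Sym2 V) : ℝ :=
  ∑ F ∈ 𝓕.filter (fun F => e ∈ F \ JT F), lam F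

/-- `𝒬`: the family of cuts `Q` of `G` (as edge sets) with `x*(Q) < 2`. -/
def Qset (G : SimpleGraph V) (xstar : Sym2 V → ℝ) : Finset (Finset (Sym2 V)) :=
  Finset.univ.filter (fun C : Finset (Sym2 V) =>
    (∃ W : Finset V, W.Nonempty ∧ W ≠ Finset.univ ∧ C = cutEdges G W) ∧ xval xstar C < 2)

/-- `x^Q(e) = Σ_{F ∈ 𝓕, Q ∩ F = {e}} λ_F`. -/
def xQ (𝓕 : Finset (Finset (Sym2 V))) (lam : Finset (Sym2 V) → ℝ)
    (C : Finset (Sym2 V)) (e : Sym2 V) : ℝ :=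
  ∑ F ∈ 𝓕.filter (fun F => C ∩ F = {e}), lam F

/-- `f^Q(β) = max {0, (4β - 1 - β x*(Q)) / (2 - x*(Q))}`. -/
def fQ (xstar : Sym2 V → ℝ) (β : ℝ) (C : Finset (Sym2 V)) : ℝ :=
  max 0 ((4 * β - 1 - β * xval xstar C) / (2 - xval xstar C))

/-- `s^F(β) = Σ_{Q ∈ 𝒬, |Q ∩ F| ≥ 2} f^Q(β) x^Q`. -/
def sF (G : SimpleGraph V) (xstar : Sym2 V → ℝ) (𝓕 : Finset (Finset (Sym2 V)))
    (lam : Finset (Sym2 V) → ℝ) (β : ℝ) (F : Finset (Sym2 V)) (e : Sym2 V) : ℝ :=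
  ∑ C ∈ (Qset G xstar).filter (fun C => 2 ≤ (C ∩ F).card), fQ xstar β C * xQ 𝓕 lam C e

end

/-!
Swapping the sums, `Σ_F λ_F s^F(β) = Σ_{Q ∈ 𝒬} Λ_Q f^Q(β) x^Q` with
`Λ_Q = Σ_{|Q ∩ F| ≥ 2} λ_F`. Every spanning tree meets every cut, so
`Λ_Q ≤ Σ_F λ_F (|Q ∩ F| - 1) ≤ x*(Q) - 1`, and a one-variable estimate in `z = x*(Q) < 2`
gives `(z - 1) f^Q(β) ≤ β (1 - √(1/β - 2))² = f(β)`. It remains to see `Σ_Q x^Q ≤ p*`: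
a tree `F` has at most one cut `Q` with `Q ∩ F = {e}` (the fundamental cut of `e`), and the
cuts in `𝒬` are `T`-odd, so the `T`-join `F(T)` crosses `Q`, i.e. contains `e`.
-/

lemma SimpleGraph.Preconnected.iff_of_forall_adj {V : Type*} {H : SimpleGraph V}
    (hH : H.Preconnected) {P : V → Prop} (hP : ∀ a b, H.Adj a b → (P a ↔ P b)) (u v : V) :
    P u ↔ P v := by
  obtain ⟨w⟩ := hH u v
  induction w with
  | nil => rfl
  | cons h _ ih => exact (hP _ _ h).trans ih

section Cuts

variable {V : Type*} [Fintype V] [DecidableEq V] {G : SimpleGraph V}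

lemma mem_Qset {x : Sym2 V → ℝ} {C : Finset (Sym2 V)} :
    C ∈ Qset G x ↔
      (∃ W : Finset V, W.Nonempty ∧ W ≠ univ ∧ C = cutEdges G W) ∧ xval x C < 2 := by
  simp [Qset]

lemma mem_cutEdges_iff {W : Finset V} {u v : V} (h : s(u, v) ∈ edgesOf G) :
    s(u, v) ∈ cutEdges G W ↔ (u ∈ W ↔ v ∉ W) := by
  simp only [cutEdges, mem_filter, h, true_and, Sym2.eq_iff]
  constructor
  · rintro ⟨a, b, ⟨rfl, rfl⟩ | ⟨rfl, rfl⟩, ha, hb⟩ <;> tauto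
  · intro huv
    by_cases hu : u ∈ W
    · exact ⟨u, v, .inl ⟨rfl, rfl⟩, hu, huv.mp hu⟩
    · exact ⟨v, u, .inr ⟨rfl, rfl⟩, by tauto, hu⟩

lemma cutEdges_compl {W : Finset V} : cutEdges G Wᶜ = cutEdges G W := by
  ext e
  induction e using Sym2.ind with
  | _ u v =>
    by_cases h : s(u, v) ∈ edgesOf G
    · rw [mem_cutEdges_iff h, mem_cutEdges_iff h, mem_compl, mem_compl]
      tauto
    · simp [cutEdges, h]

end Cuts

section SpanningTree

variable {V : Type*} [Fintype V] [DecidableEq V] {G : SimpleGraph V} {F : Finset (Sym2 V)}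

lemma IsSpanningTree.inter_cutEdges_nonempty (hF : IsSpanningTree G F) {W : Finset V}
    (hW : W.Nonempty) (hW' : W ≠ univ) : (cutEdges G W ∩ F).Nonempty := by
  obtain ⟨u, hu⟩ := hW
  obtain ⟨v, hv⟩ : ∃ v, v ∉ W := by
    by_contra! h
    exact hW' (eq_univ_iff_forall.mpr h)
  obtain ⟨w⟩ := hF.2.1.preconnected u v
  obtain ⟨d, -, hd₁, hd₂⟩ := w.exists_boundary_dart (W : Set V) hu hv
  have hdF : s(d.fst, d.snd) ∈ F := (SimpleGraph.fromEdgeSet_adj _).mp d.adj |>.1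
  exact ⟨_, mem_inter.mpr ⟨(mem_cutEdges_iff (hF.1 hdF)).mpr (by simp_all), hdF⟩⟩

lemma IsSpanningTree.cutEdges_eq_of_inter_eq_singleton (hF : IsSpanningTree G F)
    {W₁ W₂ : Finset V} {e : Sym2 V} (h₁ : cutEdges G W₁ ∩ F = {e})
    (h₂ : cutEdges G W₂ ∩ F = {e}) : cutEdges G W₁ = cutEdges G W₂ := by
  -- a tree edge crosses both cuts or neither, so `W₁` and `W₂` agree everywhere or nowhere
  have hsame : ∀ a b, (SimpleGraph.fromEdgeSet (F : Set (Sym2 V))).Adj a b →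
      ((a ∈ W₁ ↔ a ∈ W₂) ↔ (b ∈ W₁ ↔ b ∈ W₂)) := by
    intro a b hab
    have habF : s(a, b) ∈ F := ((SimpleGraph.fromEdgeSet_adj _).mp hab).1
    have hcut : s(a, b) ∈ cutEdges G W₁ ↔ s(a, b) ∈ cutEdges G W₂ := by
      simpa [habF] using congrArg (s(a, b) ∈ ·) (h₁.trans h₂.symm)
    rw [mem_cutEdges_iff (hF.1 habF), mem_cutEdges_iff (hF.1 habF)] at hcut
    tauto
  have hconst := hF.2.1.preconnected.iff_of_forall_adj hsame
  obtain ⟨v₀⟩ := hF.2.1.nonempty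
  by_cases hv₀ : v₀ ∈ W₁ ↔ v₀ ∈ W₂
  · congr 1
    ext v
    exact (hconst v v₀).mpr hv₀
  · rw [← cutEdges_compl (W := W₂)]
    congr 1
    ext v
    have := hconst v v₀
    rw [mem_compl]
    tauto

end SpanningTree

section TJoin

variable {V : Type*} [Fintype V] [DecidableEq V] {G : SimpleGraph V} {T : Finset V}
  {J : Finset (Sym2 V)}

omit [Fintype V] in
lemma odd_card_filter_mem_sym2_iff (W : Finset V) {a b : V} (hab : a ≠ b) :
    Odd #{v ∈ W | v ∈ s(a, b)} ↔ (a ∈ W ↔ b ∉ W) := by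
  have : {v ∈ W | v ∈ s(a, b)} = ({a, b} : Finset V).filter (· ∈ W) := by
    ext v
    simp only [mem_filter, Sym2.mem_iff, mem_insert, mem_singleton]
    tauto
  rw [this]
  by_cases ha : a ∈ W <;> by_cases hb : b ∈ W <;>
    simp [filter_insert, filter_singleton, ha, hb, hab]

/-- The parity of `|J ∩ δ(W)|` is that of the degree sum of `J` over `W`. -/
lemma IsTJoin.odd_card_inter_cutEdges_iff (hJ : IsTJoin G T J) (W : Finset V) :
    Odd #(J ∩ cutEdges G W) ↔ Odd #(W ∩ T) := by
  have hdeg : ∑ v ∈ W, degOn J v = ∑ f ∈ J, #{v ∈ W | v ∈ f} := by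
    simp only [degOn, card_filter]
    exact sum_comm
  have hodd : {v ∈ W | Odd (degOn J v)} = W ∩ T := by
    rw [← hJ.2]
    ext v
    simp [oddVerts]
  have hcut : {f ∈ J | Odd #{v ∈ W | v ∈ f}} = J ∩ cutEdges G W := by
    ext f
    rw [mem_filter, mem_inter]
    refine and_congr_right fun hf => ?_
    induction f using Sym2.ind with
    | _ a b =>
      have hab : G.Adj a b := by simpa [edgesOf] using hJ.1 hf
      rw [odd_card_filter_mem_sym2_iff W hab.ne, mem_cutEdges_iff (hJ.1 hf)]
  rw [← hcut, ← hodd, ← odd_sum_iff_odd_card_odd, ← odd_sum_iff_odd_card_odd, hdeg]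

lemma IsTJoin.mem_of_cutEdges_inter_eq_singleton (hJ : IsTJoin G T J)
    {F : Finset (Sym2 V)} (hJF : J ⊆ F) {W : Finset V} (hW : Odd #(W ∩ T)) {e : Sym2 V}
    (he : cutEdges G W ∩ F = {e}) : e ∈ J := by
  obtain ⟨f, hf⟩ := card_pos.mp ((hJ.odd_card_inter_cutEdges_iff W).mpr hW).pos
  rw [mem_inter] at hf
  have hfe : f ∈ cutEdges G W ∩ F := mem_inter.mpr ⟨hf.2, hJF hf.1⟩
  rw [he, mem_singleton] at hfe
  exact hfe ▸ hf.1

lemma exists_odd_cut_of_mem_Qset {x : Sym2 V → ℝ} (hx : memP G T x) {C : Finset (Sym2 V)}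
    (hC : C ∈ Qset G x) :
    ∃ W : Finset V, W.Nonempty ∧ W ≠ univ ∧ C = cutEdges G W ∧ Odd #(W ∩ T) := by
  obtain ⟨⟨W, hW, hW', rfl⟩, hlt⟩ := mem_Qset.mp hC
  refine ⟨W, hW, hW', rfl, ?_⟩
  by_contra h
  exact (hx.1 W hW hW' (Nat.not_odd_iff_even.mp h)).not_gt hlt

end TJoin

section Counting

variable {V : Type*} [DecidableEq V] {𝓕 : Finset (Finset (Sym2 V))}
  {lam : Finset (Sym2 V) → ℝ}

lemma sum_mul_card_inter_le_xval {C : Finset (Sym2 V)} {x : Sym2 V → ℝ}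
    (hdom : ∀ f ∈ C, ∑ F ∈ 𝓕 with f ∈ F, lam F ≤ x f) :
    ∑ F ∈ 𝓕, lam F * #(C ∩ F) ≤ xval x C := by
  calc ∑ F ∈ 𝓕, lam F * #(C ∩ F) = ∑ f ∈ C, ∑ F ∈ 𝓕 with f ∈ F, lam F := by
        simp only [← filter_mem_eq_inter, natCast_card_filter, mul_sum, mul_boole, sum_filter]
        exact sum_comm
    _ ≤ xval x C := sum_le_sum hdom

lemma sum_filter_two_le_card_inter_le {C : Finset (Sym2 V)} {x : Sym2 V → ℝ}
    (hlam : ∀ F ∈ 𝓕, 0 ≤ lam F) (hsum : ∑ F ∈ 𝓕, lam F = 1)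
    (hmeet : ∀ F ∈ 𝓕, (C ∩ F).Nonempty) (hdom : ∀ f ∈ C, ∑ F ∈ 𝓕 with f ∈ F, lam F ≤ x f) :
    ∑ F ∈ 𝓕 with 2 ≤ #(C ∩ F), lam F ≤ xval x C - 1 := by
  have hle : ∑ F ∈ 𝓕 with 2 ≤ #(C ∩ F), lam F ≤ ∑ F ∈ 𝓕, lam F * (#(C ∩ F) - 1) := by
    rw [sum_filter]
    refine sum_le_sum fun F hF => ?_
    have h1 : (1 : ℝ) ≤ #(C ∩ F) := by exact_mod_cast (hmeet F hF).card_pos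
    split_ifs with h2
    · have h2' : (2 : ℝ) ≤ #(C ∩ F) := by exact_mod_cast h2
      nlinarith [hlam F hF]
    · exact mul_nonneg (hlam F hF) (by linarith)
  have hsub : ∑ F ∈ 𝓕, lam F * (#(C ∩ F) - 1) = ∑ F ∈ 𝓕, lam F * #(C ∩ F) - 1 := by
    simp only [mul_sub, mul_one, sum_sub_distrib, hsum]
  linarith [sum_mul_card_inter_le_xval hdom]

lemma sum_xQ_le_pstar {𝒞 : Finset (Finset (Sym2 V))} {JT : Finset (Sym2 V) → Finset (Sym2 V)}
    {e : Sym2 V} (hlam : ∀ F ∈ 𝓕, 0 ≤ lam F)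
    (huniq : ∀ F ∈ 𝓕, ∀ C₁ ∈ 𝒞, ∀ C₂ ∈ 𝒞, C₁ ∩ F = {e} → C₂ ∩ F = {e} → C₁ = C₂)
    (hjoin : ∀ F ∈ 𝓕, ∀ C ∈ 𝒞, C ∩ F = {e} → e ∈ JT F) :
    ∑ C ∈ 𝒞, xQ 𝓕 lam C e ≤ pstar 𝓕 lam JT e := by
  calc ∑ C ∈ 𝒞, xQ 𝓕 lam C e = ∑ F ∈ 𝓕, #{C ∈ 𝒞 | C ∩ F = {e}} * lam F := by
        simp only [xQ, sum_filter]
        rw [sum_comm]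
        refine sum_congr rfl fun F _ => ?_
        rw [← sum_filter, sum_const, nsmul_eq_mul]
    _ ≤ ∑ F ∈ 𝓕, if e ∈ JT F then lam F else 0 := by
        refine sum_le_sum fun F hF => ?_
        rcases eq_empty_or_nonempty {C ∈ 𝒞 | C ∩ F = {e}} with h | ⟨C, hC⟩
        · rw [h, card_empty, Nat.cast_zero, zero_mul]
          split_ifs
          exacts [hlam F hF, le_rfl]
        · rw [mem_filter] at hC
          rw [if_pos (hjoin F hF C hC.1 hC.2)]
          have hcard : #{C ∈ 𝒞 | C ∩ F = {e}} ≤ 1 := card_le_one.mpr fun C₁ h₁ C₂ h₂ => by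
            rw [mem_filter] at h₁ h₂
            exact huniq F hF C₁ h₁.1 C₂ h₂.1 h₁.2 h₂.2
          have hcard' : (#{C ∈ 𝒞 | C ∩ F = {e}} : ℝ) ≤ 1 := by exact_mod_cast hcard
          nlinarith [hlam F hF]
    _ = pstar 𝓕 lam JT e := (sum_filter _ _).symm

lemma sum_mul_sF_eq [Fintype V] (G : SimpleGraph V) (x : Sym2 V → ℝ) (β : ℝ) (e : Sym2 V) :
    ∑ F ∈ 𝓕, lam F * sF G x 𝓕 lam β F e =
      ∑ C ∈ Qset G x, (∑ F ∈ 𝓕 with 2 ≤ #(C ∩ F), lam F) * (fQ x β C * xQ 𝓕 lam C e) := by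
  simp only [sF, mul_sum, sum_filter, sum_mul, ite_mul, zero_mul, mul_ite, mul_zero]
  exact sum_comm

end Counting

lemma div_sub_sub_eq_mul_sq {β : ℝ} (hβ : 0 < β) (hβ' : β < 1 / 2) :
    β * (1 - √(1 / β - 2)) * (3 - 1 / β - (1 - √(1 / β - 2))) / (1 - (1 - √(1 / β - 2))) =
      β * (1 - √(1 / β - 2)) ^ 2 := by
  have hpos : 0 < 1 / β - 2 := by
    rw [sub_pos, lt_div_iff₀ hβ]
    linarith
  set s := √(1 / β - 2)
  have hs : 1 / β = s ^ 2 + 2 := by linarith [Real.sq_sqrt hpos.le]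
  have hne : s ≠ 0 := (Real.sqrt_pos.mpr hpos).ne'
  rw [sub_sub_cancel, div_eq_iff hne, hs]
  ring

/-- Here `s` stands for `√(1/β - 2)`; the gap is `β (z - 2 + s)²`. -/
lemma mul_max_div_le {β s z Λ : ℝ} (hβ : 0 ≤ β) (hs : β * s ^ 2 = 1 - 2 * β) (hz : z < 2)
    (hΛ : Λ ≤ z - 1) : Λ * max 0 ((4 * β - 1 - β * z) / (2 - z)) ≤ β * (1 - s) ^ 2 := by
  rcases le_total ((4 * β - 1 - β * z) / (2 - z)) 0 with h | h
  · rw [max_eq_left h, mul_zero]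
    positivity
  · rw [max_eq_right h]
    have h2z : 0 < 2 - z := by linarith
    calc Λ * ((4 * β - 1 - β * z) / (2 - z)) ≤ (z - 1) * ((4 * β - 1 - β * z) / (2 - z)) :=
          mul_le_mul_of_nonneg_right hΛ h
      _ ≤ β * (1 - s) ^ 2 := by
          rw [mul_div_assoc', div_le_iff₀ h2z]
          nlinarith [mul_nonneg hβ (sq_nonneg (z - 2 + s))]

section TreeDistribution

variable {V : Type*} [Fintype V] [DecidableEq V] {G : SimpleGraph V} {x : Sym2 V → ℝ}
  {𝓕 : Finset (Finset (Sym2 V))} {lam : Finset (Sym2 V) → ℝ}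

lemma sum_filter_two_le_card_inter_mul_fQ_le (h𝓕 : ∀ F ∈ 𝓕, IsSpanningTree G F)
    (hlam : ∀ F ∈ 𝓕, 0 ≤ lam F) (hsum : ∑ F ∈ 𝓕, lam F = 1)
    (hdom : ∀ e ∈ edgesOf G, ∑ F ∈ 𝓕 with e ∈ F, lam F ≤ x e) {β s : ℝ} (hβ : 0 ≤ β)
    (hs : β * s ^ 2 = 1 - 2 * β) {C : Finset (Sym2 V)} (hC : C ∈ Qset G x) :
    (∑ F ∈ 𝓕 with 2 ≤ #(C ∩ F), lam F) * fQ x β C ≤ β * (1 - s) ^ 2 := by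
  obtain ⟨⟨W, hW, hW', rfl⟩, hlt⟩ := mem_Qset.mp hC
  refine mul_max_div_le hβ hs hlt (sum_filter_two_le_card_inter_le hlam hsum
    (fun F hF => (h𝓕 F hF).inter_cutEdges_nonempty hW hW') fun f hf => hdom f ?_)
  exact (mem_filter.mp hf).1

lemma sum_xQ_Qset_le_pstar {T : Finset V} (hx : memP G T x) (h𝓕 : ∀ F ∈ 𝓕, IsSpanningTree G F)
    (hlam : ∀ F ∈ 𝓕, 0 ≤ lam F) {JT : Finset (Sym2 V) → Finset (Sym2 V)}
    (hJT : ∀ F ∈ 𝓕, JT F ⊆ F ∧ IsTJoin G T (JT F)) (e : Sym2 V) :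
    ∑ C ∈ Qset G x, xQ 𝓕 lam C e ≤ pstar 𝓕 lam JT e := by
  refine sum_xQ_le_pstar hlam (fun F hF C₁ hC₁ C₂ hC₂ h₁ h₂ => ?_) fun F hF C hC he => ?_
  · obtain ⟨W₁, -, -, rfl, -⟩ := exists_odd_cut_of_mem_Qset hx hC₁
    obtain ⟨W₂, -, -, rfl, -⟩ := exists_odd_cut_of_mem_Qset hx hC₂
    exact (h𝓕 F hF).cutEdges_eq_of_inter_eq_singleton h₁ h₂
  · obtain ⟨W, -, -, rfl, hodd⟩ := exists_odd_cut_of_mem_Qset hx hC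
    exact (hJT F hF).2.mem_of_cutEdges_inter_eq_singleton (hJT F hF).1 hodd he

end TreeDistribution

theorem stmt16_general {V : Type*} [Fintype V] [DecidableEq V]
    (G : SimpleGraph V)
    (T : Finset V)
    (xstar : Sym2 V → ℝ) (hxP : memP G T xstar)
    (𝓕 : Finset (Finset (Sym2 V))) (lam : Finset (Sym2 V) → ℝ)
    (h𝓕 : ∀ F ∈ 𝓕, IsSpanningTree G F) (hlam : ∀ F ∈ 𝓕, 0 < lam F)
    (hsum : ∑ F ∈ 𝓕, lam F = 1)
    (hdom : ∀ e ∈ edgesOf G, (∑ F ∈ 𝓕.filter (fun F => e ∈ F), lam F) ≤ xstar e)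
    (JT : Finset (Sym2 V) → Finset (Sym2 V))
    (hJT : ∀ F ∈ 𝓕, JT F ⊆ F ∧ IsTJoin G T (JT F))
    (β : ℝ) (hβ1 : 1 / 3 < β) (hβ2 : β < 1 / 2) :
    ∀ e : Sym2 V,
      (∑ F ∈ 𝓕, lam F * sF G xstar 𝓕 lam β F e) ≤
        (β * (1 - Real.sqrt (1 / β - 2)) *
          (3 - 1 / β - (1 - Real.sqrt (1 / β - 2))) /
          (1 - (1 - Real.sqrt (1 / β - 2)))) * pstar 𝓕 lam JT e := by
  intro e
  have hβ : 0 < β := by linarith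
  have hlam' : ∀ F ∈ 𝓕, 0 ≤ lam F := fun F hF => (hlam F hF).le
  rw [div_sub_sub_eq_mul_sq hβ hβ2, sum_mul_sF_eq]
  set s := √(1 / β - 2)
  have hs : β * s ^ 2 = 1 - 2 * β := by
    rw [Real.sq_sqrt (by rw [sub_nonneg, le_div_iff₀ hβ]; linarith)]
    field_simp
  calc ∑ C ∈ Qset G xstar, (∑ F ∈ 𝓕 with 2 ≤ #(C ∩ F), lam F) * (fQ xstar β C * xQ 𝓕 lam C e)
      ≤ ∑ C ∈ Qset G xstar, β * (1 - s) ^ 2 * xQ 𝓕 lam C e := by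
        refine sum_le_sum fun C hC => ?_
        rw [← mul_assoc]
        exact mul_le_mul_of_nonneg_right
          (sum_filter_two_le_card_inter_mul_fQ_le h𝓕 hlam' hsum hdom hβ.le hs hC)
          (sum_nonneg fun F hF => hlam' F (mem_filter.mp hF).1)
    _ = β * (1 - s) ^ 2 * ∑ C ∈ Qset G xstar, xQ 𝓕 lam C e := (mul_sum _ _ _).symm
    _ ≤ β * (1 - s) ^ 2 * pstar 𝓕 lam JT e := by
        gcongr
        exact sum_xQ_Qset_le_pstar hxP h𝓕 hlam' hJT e

/-- for every `β ∈ (1/3, 1/2)`,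
`Σ_F λ_F s^F(β) ≤ f(β) p*` componentwise, where
`f(β) = β ω (3 - 1/β - ω)/(1 - ω)` with `ω = 1 - √(1/β - 2)`. -/
theorem stmt16 {V : Type*} [Fintype V] [DecidableEq V]
    (G : SimpleGraph V) (hG : G.Connected)
    (T : Finset V) (hT : Even T.card)
    (c : Sym2 V → ℝ) (hc : ∀ e, 0 ≤ c e)
    (xstar : Sym2 V → ℝ) (hxP : memP G T xstar)
    (hxmin : ∀ y : Sym2 V → ℝ, memP G T y → dotE G c xstar ≤ dotE G c y)
    (𝓕 : Finset (Finset (Sym2 V))) (lam : Finset (Sym2 V) → ℝ)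
    (h𝓕 : ∀ F ∈ 𝓕, IsSpanningTree G F) (hlam : ∀ F ∈ 𝓕, 0 < lam F)
    (hsum : ∑ F ∈ 𝓕, lam F = 1)
    (hdom : ∀ e ∈ edgesOf G, (∑ F ∈ 𝓕.filter (fun F => e ∈ F), lam F) ≤ xstar e)
    (JT : Finset (Sym2 V) → Finset (Sym2 V))
    (hJT : ∀ F ∈ 𝓕, JT F ⊆ F ∧ IsTJoin G T (JT F))
    (β : ℝ) (hβ1 : 1 / 3 < β) (hβ2 : β < 1 / 2) :
    ∀ e : Sym2 V,
      (∑ F ∈ 𝓕, lam F * sF G xstar 𝓕 lam β F e) ≤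
        (β * (1 - Real.sqrt (1 / β - 2)) *
          (3 - 1 / β - (1 - Real.sqrt (1 / β - 2))) /
          (1 - (1 - Real.sqrt (1 / β - 2)))) * pstar 𝓕 lam JT e :=
  stmt16_general G T xstar hxP 𝓕 lam h𝓕 hlam hsum hdom JT hJT β hβ1 hβ2
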